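/- arXiv:1904.08778 — 2 statements merged into one kernel-verified Lean document; each statement's English description precedes it below -/
import Mathlib

section
/- The linear system is completely herdable if and only if there exists an entrywise positive vector k in range(C), where C is the controllability matrix. -/
/-!
Write `K` for the range of the controllability matrix. By Cayley–Hamilton, a linear functional
`φ` vanishes on `K` iff `φ (A ^ d * B) v = 0` for all `d` and `v`. Expanding the exponential in
its power series, and conversely differentiating `s ↦ φ (exp (s A) B v)` at `s = 0`, this holds
iff `φ (exp (s A) B v) = 0` for all `s`, or merely for all `s` in an interval.

Hence every state reached from `0` lies in `K`; herding `0` above the threshold `1` gives a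
positive vector of `K`. Conversely, if `φ` vanishes on the states reachable from `0` at time `1`,
the input `τ ↦ f τ • v` with `f τ = φ (exp ((1 - τ) A) B v)` shows `∫ f ^ 2 = 0`, so `f = 0` on
`[0, 1]` and `φ` vanishes on `K`: every point of `K` is reachable. For a positive `k ∈ K`, steering
`0` to `c • k` with `c` large and adding the free response `exp A x0` herds every state.
-/

open MeasureTheory

/-- The state of the LTI system `x' = A x + B u` at time `tf`, starting from `x0`
under the input `u`:  `x(tf) = exp(tf A) x0 + ∫_0^tf exp((tf-τ) A) B u(τ) dτ`. -/
noncomputable def stateAt {n m : ℕ} (A : Matrix (Fin n) (Fin n) ℝ) (B : Matrix (Fin n) (Fin m) ℝ)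
    (x0 : Fin n → ℝ) (u : ℝ → Fin m → ℝ) (tf : ℝ) : Fin n → ℝ :=
  (NormedSpace.exp (tf • A)).mulVec x0 +
    ∫ τ in (0:ℝ)..tf, (NormedSpace.exp ((tf - τ) • A) * B).mulVec (u τ)

/-- The input `u` is admissible (integrable) on `[0, tf]`. -/
def ValidInput {n m : ℕ} (A : Matrix (Fin n) (Fin n) ℝ) (B : Matrix (Fin n) (Fin m) ℝ)
    (tf : ℝ) (u : ℝ → Fin m → ℝ) : Prop :=
  IntervalIntegrable (fun τ => (NormedSpace.exp ((tf - τ) • A) * B).mulVec (u τ)) volume 0 tf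

/-- A subset `S` of the states is herdable: from every initial condition and for every
threshold `h ≥ 0` there are a finite time `tf > 0` and an input driving every state in `S`
at least to `h` at time `tf`. -/
def Herdable {n m : ℕ} (A : Matrix (Fin n) (Fin n) ℝ) (B : Matrix (Fin n) (Fin m) ℝ)
    (S : Set (Fin n)) : Prop :=
  ∀ x0 : Fin n → ℝ, ∀ h : ℝ, 0 ≤ h →
    ∃ tf : ℝ, 0 < tf ∧ ∃ u : ℝ → Fin m → ℝ, ValidInput A B tf u ∧
      ∀ i ∈ S, h ≤ stateAt A B x0 u tf i

/-- The controllability matrix `C = [B, AB, …, A^{n-1} B]`; the column indexed by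
`(d, j)` is the `j`-th column of `A^d B`. -/
def ctrb {n m : ℕ} (A : Matrix (Fin n) (Fin n) ℝ) (B : Matrix (Fin n) (Fin m) ℝ) :
    Matrix (Fin n) (Fin n × Fin m) ℝ := fun i p => (A ^ (p.1 : ℕ) * B) i p.2


open NormedSpace Set Matrix

section BanachAlgebra

variable {𝔸 E : Type*} [NormedRing 𝔸] [NormedAlgebra ℝ 𝔸] [CompleteSpace 𝔸]
  [NormedAddCommGroup E] [NormedSpace ℝ E]

theorem map_exp_eq_zero_of_map_pow_eq_zero (ψ : 𝔸 →L[ℝ] E) {a : 𝔸}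
    (h : ∀ d : ℕ, ψ (a ^ d) = 0) : ψ (exp a) = 0 := by
  rw [exp_eq_tsum ℝ, ψ.map_tsum (expSeries_summable' a)]
  simp [h]

theorem map_pow_eq_zero_of_map_exp_eq_zero (ψ : 𝔸 →L[ℝ] E) {a : 𝔸}
    (h : ∀ s ∈ Ioo (0 : ℝ) 1, ψ (exp (s • a)) = 0) (d : ℕ) : ψ (a ^ d) = 0 := by
  have hvanish : ∀ d : ℕ, EqOn (fun s : ℝ => ψ (a ^ d * exp (s • a))) 0 (Ioo 0 1) := by
    intro d
    induction d with
    | zero => intro s hs; simpa using h s hs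
    | succ d ih =>
      intro s hs
      have hderiv : HasDerivAt (fun t : ℝ => ψ (a ^ d * exp (t • a)))
          (ψ (a ^ (d + 1) * exp (s • a))) s := by
        have := (hasDerivAt_exp_smul_const' a s).const_mul (a ^ d)
        rw [← mul_assoc, ← pow_succ] at this
        exact ψ.hasFDerivAt.comp_hasDerivAt s this
      have hzero : (fun t : ℝ => ψ (a ^ d * exp (t • a))) =ᶠ[nhds s] fun _ => 0 :=
        Filter.eventuallyEq_of_mem (isOpen_Ioo.mem_nhds hs) ih
      exact hderiv.unique ((hasDerivAt_const s 0).congr_of_eventuallyEq hzero)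
  have hcont : Continuous fun s : ℝ => ψ (a ^ d * exp (s • a)) :=
    ψ.continuous.comp (continuous_const.mul (differentiable_exp_smul_const ℝ a).continuous)
  have := (hvanish d).closure hcont continuous_const
  rw [closure_Ioo zero_ne_one] at this
  simpa using this (left_mem_Icc.mpr zero_le_one)

end BanachAlgebra

theorem exists_forall_le_add_smul {ι : Type*} [Finite ι] {k : ι → ℝ} (hk : ∀ i, 0 < k i)
    (e : ι → ℝ) (h : ℝ) : ∃ c : ℝ, ∀ i, h ≤ (e + c • k) i := by
  have hlarge : ∀ i, ∀ᶠ c in Filter.atTop, h ≤ e i + c * k i := fun i =>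
    (Filter.tendsto_atTop_add_const_left _ (e i)
      (Filter.tendsto_id.atTop_mul_const (hk i))).eventually_ge_atTop h
  obtain ⟨c, hc⟩ := (Filter.eventually_all.2 hlarge).exists
  exact ⟨c, by simpa using hc⟩

theorem eqOn_zero_of_intervalIntegral_eq_zero {f : ℝ → ℝ} {a b : ℝ} (hab : a < b)
    (hf : ContinuousOn f (Icc a b)) (hf₀ : ∀ x ∈ Icc a b, 0 ≤ f x)
    (h : ∫ x in a..b, f x = 0) : EqOn f 0 (Icc a b) := by
  intro x hx
  by_contra hne
  exact (intervalIntegral.integral_pos hab hf (fun y hy => hf₀ y (Ioc_subset_Icc_self hy))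
    ⟨x, hx, (hf₀ x hx).lt_of_ne (Ne.symm hne)⟩).ne' h

open Polynomial in
theorem Matrix.pow_mem_span_pow_lt {R : Type*} [CommRing R] [Nontrivial R] {n : ℕ}
    (A : Matrix (Fin n) (Fin n) R) (d : ℕ) :
    A ^ d ∈ Submodule.span R (range fun i : Fin n => A ^ (i : ℕ)) := by
  rcases n.eq_zero_or_pos with rfl | hn
  · rw [Subsingleton.elim (A ^ d) 0]
    exact zero_mem _
  have hne : A.charpoly ≠ 1 := fun h1 => by
    have := A.charpoly_natDegree_eq_dim
    simp only [h1, natDegree_one, Fintype.card_fin] at this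
    omega
  have hdeg : (X ^ d %ₘ A.charpoly).natDegree < n := by
    simpa using natDegree_modByMonic_lt _ A.charpoly_monic hne
  rw [A.pow_eq_aeval_mod_charpoly, aeval_eq_sum_range' hdeg]
  exact Submodule.sum_mem _ fun i hi =>
    Submodule.smul_mem _ _ (Submodule.subset_span ⟨⟨i, Finset.mem_range.1 hi⟩, rfl⟩)

section Controllability

variable {n m : ℕ} (A : Matrix (Fin n) (Fin n) ℝ) (B : Matrix (Fin n) (Fin m) ℝ)

theorem ctrb_mulVec (y : Fin n × Fin m → ℝ) :
    ctrb A B *ᵥ y = ∑ d : Fin n, (A ^ (d : ℕ) * B) *ᵥ Function.curry y d := by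
  ext i
  simp only [mulVec, dotProduct, ctrb, Matrix.mul_apply, Fintype.sum_prod_type, Finset.sum_apply,
    Function.curry_apply]

theorem pow_mul_mulVec_mem_range_ctrb (d : ℕ) (v : Fin m → ℝ) :
    (A ^ d * B) *ᵥ v ∈ LinearMap.range (ctrb A B).mulVecLin := by
  let L : Matrix (Fin n) (Fin n) ℝ →ₗ[ℝ] (Fin n → ℝ) := (mulVecBilin ℝ ℝ).flip (B *ᵥ v)
  suffices Submodule.span ℝ (range fun i : Fin n => A ^ (i : ℕ)) ≤
      (LinearMap.range (ctrb A B).mulVecLin).comap L from by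
    simpa [L] using this (A.pow_mem_span_pow_lt d)
  rw [Submodule.span_le]
  rintro _ ⟨i, rfl⟩
  refine ⟨Function.uncurry (Pi.single i v), ?_⟩
  rw [mulVecLin_apply, ctrb_mulVec, Function.curry_uncurry,
    Fintype.sum_eq_single i fun d hd => by simp [hd]]
  simp [L]

theorem range_ctrb_le_ker_iff {M : Type*} [AddCommGroup M] [Module ℝ M]
    (φ : (Fin n → ℝ) →ₗ[ℝ] M) :
    LinearMap.range (ctrb A B).mulVecLin ≤ LinearMap.ker φ ↔
      ∀ (d : ℕ) (v : Fin m → ℝ), φ ((A ^ d * B) *ᵥ v) = 0 := by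
  refine ⟨fun h d v => h (pow_mul_mulVec_mem_range_ctrb A B d v), ?_⟩
  rintro h _ ⟨y, rfl⟩
  simp [ctrb_mulVec, h]

theorem stateAt_eq_exp_mulVec_add (x0 : Fin n → ℝ) (u : ℝ → Fin m → ℝ) (tf : ℝ) :
    stateAt A B x0 u tf = exp (tf • A) *ᵥ x0 + stateAt A B 0 u tf := by
  simp [stateAt]

def reachable (tf : ℝ) : Submodule ℝ (Fin n → ℝ) where
  carrier := {x | ∃ u, ValidInput A B tf u ∧ stateAt A B 0 u tf = x}
  zero_mem' := ⟨0, by simp [ValidInput], by simp [stateAt]⟩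
  add_mem' := by
    rintro _ _ ⟨u, hu, rfl⟩ ⟨u', hu', rfl⟩
    refine ⟨u + u', ?_, by simp [stateAt, mulVec_add, intervalIntegral.integral_add hu hu']⟩
    simp only [ValidInput, Pi.add_apply, mulVec_add]
    exact hu.add hu'
  smul_mem' := by
    rintro c _ ⟨u, hu, rfl⟩
    refine ⟨c • u, ?_, by simp [stateAt, mulVec_smul, intervalIntegral.integral_smul]⟩
    simp only [ValidInput, Pi.smul_apply, mulVec_smul]
    exact hu.smul c

-- Any matrix norm will do: only the topology it induces enters the statements below.
attribute [local instance] Matrix.linftyOpNormedRing Matrix.linftyOpNormedAlgebra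

variable (φ : Module.Dual ℝ (Fin n → ℝ))

theorem map_exp_smul_mul_mulVec_eq_zero
    (hφ : LinearMap.range (ctrb A B).mulVecLin ≤ LinearMap.ker φ) (s : ℝ) (v : Fin m → ℝ) :
    φ ((exp (s • A) * B) *ᵥ v) = 0 := by
  let ψ := LinearMap.toContinuousLinearMap (φ ∘ₗ (mulVecBilin ℝ ℝ).flip (B *ᵥ v))
  have hψ : ∀ M, ψ M = φ ((M * B) *ᵥ v) := fun M => by rw [← mulVec_mulVec]; rfl
  have hpow : ∀ d : ℕ, ψ ((s • A) ^ d) = 0 := fun d => by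
    rw [hψ, _root_.smul_pow, Matrix.smul_mul, smul_mulVec, map_smul,
      (range_ctrb_le_ker_iff A B φ).1 hφ d v, smul_zero]
  rw [← hψ]
  exact map_exp_eq_zero_of_map_pow_eq_zero ψ hpow

theorem range_ctrb_le_ker_of_map_exp_smul_mul_mulVec_eq_zero
    (h : ∀ v : Fin m → ℝ, ∀ s ∈ Ioo (0 : ℝ) 1, φ ((exp (s • A) * B) *ᵥ v) = 0) :
    LinearMap.range (ctrb A B).mulVecLin ≤ LinearMap.ker φ := by
  refine (range_ctrb_le_ker_iff A B φ).2 fun d v => ?_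
  let ψ := LinearMap.toContinuousLinearMap (φ ∘ₗ (mulVecBilin ℝ ℝ).flip (B *ᵥ v))
  have hψ : ∀ M, ψ M = φ ((M * B) *ᵥ v) := fun M => by rw [← mulVec_mulVec]; rfl
  rw [← hψ]
  exact map_pow_eq_zero_of_map_exp_eq_zero ψ (fun s hs => (hψ _).trans (h v s hs)) d

theorem stateAt_zero_mem_range_ctrb {tf : ℝ} {u : ℝ → Fin m → ℝ} (hu : ValidInput A B tf u) :
    stateAt A B 0 u tf ∈ LinearMap.range (ctrb A B).mulVecLin := by
  rw [← Subspace.forall_mem_dualAnnihilator_apply_eq_zero_iff]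
  intro φ hφ
  have hφ' : LinearMap.range (ctrb A B).mulVecLin ≤ LinearMap.ker φ :=
    fun w hw => (Submodule.mem_dualAnnihilator φ).1 hφ w hw
  let φc := LinearMap.toContinuousLinearMap φ
  calc φ (stateAt A B 0 u tf) = ∫ τ in (0 : ℝ)..tf, φc ((exp ((tf - τ) • A) * B) *ᵥ u τ) := by
        rw [φc.intervalIntegral_comp_comm hu]
        simp [stateAt, φc]
    _ = 0 := by
        simp [φc, map_exp_smul_mul_mulVec_eq_zero A B φ hφ']

theorem range_ctrb_le_reachable : LinearMap.range (ctrb A B).mulVecLin ≤ reachable A B 1 := by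
  rw [← Subspace.dualAnnihilator_le_dualAnnihilator_iff]
  intro φ hφ
  rw [Submodule.mem_dualAnnihilator] at hφ ⊢
  refine range_ctrb_le_ker_of_map_exp_smul_mul_mulVec_eq_zero A B φ fun v s hs => ?_
  let φc := LinearMap.toContinuousLinearMap φ
  have hcont : Continuous fun τ : ℝ => (exp ((1 - τ) • A) * B) *ᵥ v :=
    (((differentiable_exp_smul_const ℝ A).continuous.comp
      (continuous_const.sub continuous_id)).matrix_mul continuous_const).matrix_mulVec
      continuous_const
  let f : ℝ → ℝ := fun τ => φ ((exp ((1 - τ) • A) * B) *ᵥ v)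
  have hf : Continuous f := φc.continuous.comp hcont
  have hu : ValidInput A B 1 (fun τ => f τ • v) := by
    simp only [ValidInput, mulVec_smul]
    exact (hf.smul hcont).intervalIntegrable 0 1
  have hint : ∫ τ in (0 : ℝ)..1, f τ * f τ = 0 := by
    have := hφ _ ⟨_, hu, rfl⟩
    simp only [stateAt, mulVec_zero, zero_add] at this
    change φc _ = 0 at this
    rw [← φc.intervalIntegral_comp_comm hu] at this
    simpa [φc, mulVec_smul] using this
  have := eqOn_zero_of_intervalIntegral_eq_zero zero_lt_one (hf.mul hf).continuousOn
    (fun x _ => mul_self_nonneg _) hint (x := 1 - s) ⟨by linarith [hs.2], by linarith [hs.1]⟩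
  simpa [f] using mul_self_eq_zero.1 this

end Controllability

/-- The system is completely herdable iff the range of the controllability matrix
contains an entrywise positive vector. -/
theorem completelyHerdable_iff_range_ctrb_pos {n m : ℕ}
    (A : Matrix (Fin n) (Fin n) ℝ) (B : Matrix (Fin n) (Fin m) ℝ) :
    Herdable A B Set.univ ↔
      ∃ k : Fin n → ℝ, (∃ y : Fin n × Fin m → ℝ, (ctrb A B).mulVec y = k) ∧
        ∀ i : Fin n, 0 < k i := by
  constructor
  · intro hH
    obtain ⟨tf, -, u, hu, hge⟩ := hH 0 1 zero_le_one
    obtain ⟨y, hy⟩ := stateAt_zero_mem_range_ctrb A B hu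
    exact ⟨_, ⟨y, hy⟩, fun i => one_pos.trans_le (hge i trivial)⟩
  · rintro ⟨k, ⟨y, rfl⟩, hk⟩ x0 h -
    obtain ⟨c, hc⟩ := exists_forall_le_add_smul hk (exp ((1 : ℝ) • A) *ᵥ x0) h
    obtain ⟨u, hu, hstate⟩ := (reachable A B 1).smul_mem c (range_ctrb_le_reachable A B ⟨y, rfl⟩)
    refine ⟨1, one_pos, u, hu, fun i _ => ?_⟩
    rw [stateAt_eq_exp_mulVec_add, hstate]
    exact hc i
end

section
/- Assume m = 1 (a single input) and that the graph of the system is an input-rooted out-branching: every state i is the endpoint of exactly one walk from the input; let d_i denote the length of this unique walk and d_max = max_i d_i. Then the maximum cardinality of a herdable subset of states equals the sum over d = 1,...,d_max of max(|N_d|, |P_d|). -/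
/-- `k` is a walk of length `e + 1` from input `j` to state `i`: it visits the states
`k 0, k 1, …, k e`, ends at `i`, starts along a nonzero entry of `B`, and follows
nonzero entries of `A`. -/
def IsWalk {n m : ℕ} (A : Matrix (Fin n) (Fin n) ℝ) (B : Matrix (Fin n) (Fin m) ℝ)
    (j : Fin m) (i : Fin n) {e : ℕ} (k : Fin (e + 1) → Fin n) : Prop :=
  k (Fin.last e) = i ∧ B (k 0) j ≠ 0 ∧ ∀ t : Fin e, A (k t.succ) (k t.castSucc) ≠ 0

/-- The weight of the walk `k 0, …, k e` from input `j`: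
`B (k 0) j * ∏ₜ A (k (t+1)) (k t)`. -/
def walkWeight {n m : ℕ} (A : Matrix (Fin n) (Fin n) ℝ) (B : Matrix (Fin n) (Fin m) ℝ)
    (j : Fin m) {e : ℕ} (k : Fin (e + 1) → Fin n) : ℝ :=
  B (k 0) j * ∏ t : Fin e, A (k t.succ) (k t.castSucc)

open Classical in
/-- `rho A B j i d` is the sum of the weights of all walks of length `d` from input `j`
to state `i` (zero if there are none, in particular for `d = 0`). -/
noncomputable def rho {n m : ℕ} (A : Matrix (Fin n) (Fin n) ℝ) (B : Matrix (Fin n) (Fin m) ℝ)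
    (j : Fin m) (i : Fin n) : ℕ → ℝ
  | 0 => 0
  | e + 1 => ∑ k : Fin (e + 1) → Fin n,
      if IsWalk A B j i k then walkWeight A B j k else 0

/-- `Pset A B j d` is the set of states reachable from input `j` by at least one walk of
length `d` of positive weight. -/
def Pset {n m : ℕ} (A : Matrix (Fin n) (Fin n) ℝ) (B : Matrix (Fin n) (Fin m) ℝ)
    (j : Fin m) : ℕ → Set (Fin n)
  | 0 => ∅
  | e + 1 => {i | ∃ k : Fin (e + 1) → Fin n, IsWalk A B j i k ∧ 0 < walkWeight A B j k}

/-- `Nset A B j d` is the set of states reachable from input `j` by at least one walk of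
length `d` of negative weight. -/
def Nset {n m : ℕ} (A : Matrix (Fin n) (Fin n) ℝ) (B : Matrix (Fin n) (Fin m) ℝ)
    (j : Fin m) : ℕ → Set (Fin n)
  | 0 => ∅
  | e + 1 => {i | ∃ k : Fin (e + 1) → Fin n, IsWalk A B j i k ∧ walkWeight A B j k < 0}

/-! The entry `(A ^ d * B) i` is the total weight of the walks of length `d + 1` from the input
to `i`. In an out-branching each state `i` is reached by exactly one walk, of some weight `w i`
and length `ℓ i ≤ n` (its states have distinct depths), so the range of the controllability
matrix is exactly the set of vectors `i ↦ w i * c (ℓ i)` with `c` arbitrary: one free scalar per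
depth. On the states of depth `d`, such a vector is positive only where `w` has the sign of
`c d`, that is on at most `max |N_d| |P_d|` states, and `c d = ±1` attains this. -/

section Walks

variable {n m : ℕ} {A : Matrix (Fin n) (Fin n) ℝ} {B : Matrix (Fin n) (Fin m) ℝ}
  {j : Fin m} {i : Fin n}

theorem walkWeight_eq_zero_of_not_isWalk {e : ℕ} {k : Fin (e + 1) → Fin n}
    (hk : k (Fin.last e) = i) (h : ¬IsWalk A B j i k) : walkWeight A B j k = 0 := by
  by_contra hw
  obtain ⟨hB, hA⟩ := mul_ne_zero_iff.1 hw
  exact h ⟨hk, hB, fun t => Finset.prod_ne_zero_iff.1 hA t (Finset.mem_univ t)⟩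

theorem walkWeight_snoc {e : ℕ} (k : Fin (e + 1) → Fin n) (x : Fin n) :
    walkWeight A B j (Fin.snoc k x) = A x (k (Fin.last e)) * walkWeight A B j k := by
  simp only [walkWeight, Fin.prod_univ_castSucc, Fin.succ_last, Fin.snoc_last,
    Fin.succ_castSucc, Fin.snoc_castSucc]
  rw [show (0 : Fin (e + 2)) = Fin.castSucc 0 from rfl, Fin.snoc_castSucc]
  ring

theorem rho_succ_eq_sum (e : ℕ) :
    rho A B j i (e + 1) =
      ∑ k : Fin (e + 1) → Fin n, if k (Fin.last e) = i then walkWeight A B j k else 0 := by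
  refine Finset.sum_congr rfl fun k _ => ?_
  by_cases hk : IsWalk A B j i k
  · rw [if_pos hk, if_pos hk.1]
  · split_ifs with hlast
    · exact (walkWeight_eq_zero_of_not_isWalk hlast hk).symm
    · rfl

theorem pow_mul_apply_eq_rho (e : ℕ) : (A ^ e * B) i j = rho A B j i (e + 1) := by
  induction e generalizing i with
  | zero =>
    rw [rho_succ_eq_sum, ← (Equiv.funUnique (Fin 1) (Fin n)).symm.sum_comp]
    simp [walkWeight]
  | succ e ih =>
    have hsnoc : rho A B j i (e + 2) =
        ∑ k : Fin (e + 1) → Fin n, walkWeight A B j (Fin.snoc k i) := by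
      rw [rho_succ_eq_sum, ← (Fin.snocEquiv fun _ => Fin n).sum_comp, Fintype.sum_prod_type]
      simp [Fin.snocEquiv]
    rw [hsnoc, pow_succ', Matrix.mul_assoc, Matrix.mul_apply]
    simp only [ih, rho_succ_eq_sum, Finset.mul_sum, mul_ite, mul_zero, walkWeight_snoc]
    rw [Finset.sum_comm]
    simp

theorem ctrb_mulVec_apply (y : Fin n × Fin m → ℝ) :
    (ctrb A B).mulVec y i = ∑ p : Fin n × Fin m, rho A B p.2 i (p.1 + 1) * y p := by
  simp only [Matrix.mulVec, dotProduct, ctrb, pow_mul_apply_eq_rho]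

theorem IsWalk.prefix {e : ℕ} {k : Fin (e + 1) → Fin n} (h : IsWalk A B j i k)
    (t : Fin (e + 1)) :
    IsWalk A B j (k t) fun s : Fin (t + 1) => k (Fin.castLE t.isLt s) := by
  obtain ⟨-, hB, hA⟩ := h
  refine ⟨congrArg k (Fin.ext (by simp)), hB, fun s => ?_⟩
  convert hA ⟨s, by omega⟩ using 3 <;> ext <;> simp

theorem IsWalk.injective (ℓ : Fin n → ℕ)
    (hℓ : ∀ i e (k : Fin (e + 1) → Fin n), IsWalk A B j i k → ℓ i = e)
    {e : ℕ} {k : Fin (e + 1) → Fin n} (h : IsWalk A B j i k) : Function.Injective k :=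
  fun a b hab => by
    have ha := hℓ _ _ _ (h.prefix a)
    rw [hab, hℓ _ _ _ (h.prefix b)] at ha
    exact Fin.ext ha.symm

theorem IsWalk.length_lt (ℓ : Fin n → ℕ)
    (hℓ : ∀ i e (k : Fin (e + 1) → Fin n), IsWalk A B j i k → ℓ i = e)
    {e : ℕ} {k : Fin (e + 1) → Fin n} (h : IsWalk A B j i k) : e < n := by
  simpa using Fintype.card_le_of_injective k (h.injective ℓ hℓ)

variable {w : (e : ℕ) × (Fin (e + 1) → Fin n)}

theorem exists_isWalk_and_iff_of_unique (hw : IsWalk A B j i w.2)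
    (huniq : ∀ w', IsWalk A B j i w'.2 → w' = w) (d : ℕ) (p : ℝ → Prop) :
    (∃ k : Fin (d + 1) → Fin n, IsWalk A B j i k ∧ p (walkWeight A B j k)) ↔
      d = w.1 ∧ p (walkWeight A B j w.2) := by
  obtain ⟨e, k⟩ := w
  constructor
  · rintro ⟨k', hk', hp⟩
    obtain ⟨rfl, hkk⟩ := Sigma.mk.inj_iff.1 (huniq ⟨d, k'⟩ hk')
    exact ⟨rfl, eq_of_heq hkk ▸ hp⟩
  · rintro ⟨rfl, hp⟩
    exact ⟨k, hw, hp⟩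

theorem rho_succ_of_unique (hw : IsWalk A B j i w.2)
    (huniq : ∀ w', IsWalk A B j i w'.2 → w' = w) (d : ℕ) :
    rho A B j i (d + 1) = if d = w.1 then walkWeight A B j w.2 else 0 := by
  obtain ⟨e, k⟩ := w
  split_ifs with hd
  · subst hd
    refine (Fintype.sum_eq_single k fun k' hk' => if_neg fun hwalk => hk' ?_).trans
      (if_pos hw)
    exact eq_of_heq (Sigma.mk.inj_iff.1 (huniq ⟨d, k'⟩ hwalk)).2
  · exact Finset.sum_eq_zero fun k' _ =>
      if_neg fun hwalk => hd (Sigma.mk.inj_iff.1 (huniq ⟨d, k'⟩ hwalk)).1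

theorem mem_Pset_iff_of_unique (hw : IsWalk A B j i w.2)
    (huniq : ∀ w', IsWalk A B j i w'.2 → w' = w) (d : ℕ) :
    i ∈ Pset A B j d ↔ d = w.1 + 1 ∧ 0 < walkWeight A B j w.2 := by
  cases d with
  | zero => simp [Pset]
  | succ d => simpa [Pset] using exists_isWalk_and_iff_of_unique hw huniq d (0 < ·)

theorem mem_Nset_iff_of_unique (hw : IsWalk A B j i w.2)
    (huniq : ∀ w', IsWalk A B j i w'.2 → w' = w) (d : ℕ) :
    i ∈ Nset A B j d ↔ d = w.1 + 1 ∧ walkWeight A B j w.2 < 0 := by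
  cases d with
  | zero => simp [Nset]
  | succ d => simpa [Nset] using exists_isWalk_and_iff_of_unique hw huniq d (· < 0)

end Walks

section SingleInput

variable {n : ℕ} {A : Matrix (Fin n) (Fin n) ℝ} {B : Matrix (Fin n) (Fin 1) ℝ}

theorem ctrb_mulVec_apply_of_unique {i : Fin n} {w : (e : ℕ) × (Fin (e + 1) → Fin n)}
    (hw : IsWalk A B 0 i w.2) (huniq : ∀ w', IsWalk A B 0 i w'.2 → w' = w) (hlt : w.1 < n)
    (y : Fin n × Fin 1 → ℝ) :
    (ctrb A B).mulVec y i = walkWeight A B 0 w.2 * y (⟨w.1, hlt⟩, 0) := by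
  rw [ctrb_mulVec_apply, Fintype.sum_prod_type]
  simp only [Fin.sum_univ_one, rho_succ_of_unique hw huniq, ite_mul, zero_mul]
  rw [Fintype.sum_eq_single ⟨w.1, hlt⟩ fun d hd => if_neg fun h => hd (Fin.ext h), if_pos rfl]

theorem range_ctrb_mulVec_of_unique (walk : Fin n → (e : ℕ) × (Fin (e + 1) → Fin n))
    (hwalk : ∀ i, IsWalk A B 0 i (walk i).2)
    (huniq : ∀ i w, IsWalk A B 0 i w.2 → w = walk i) :
    Set.range (ctrb A B).mulVec =
      Set.range fun c : ℕ → ℝ => fun i => walkWeight A B 0 (walk i).2 * c ((walk i).1 + 1) := by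
  have hlt i : (walk i).1 < n :=
    (hwalk i).length_lt _ fun i' e k hk => (congrArg Sigma.fst (huniq i' ⟨e, k⟩ hk)).symm
  have hmulVec y i := ctrb_mulVec_apply_of_unique (hwalk i) (huniq i) (hlt i) y
  ext v
  constructor
  · rintro ⟨y, rfl⟩
    refine ⟨fun d => if h : d - 1 < n then y (⟨d - 1, h⟩, 0) else 0, funext fun i => ?_⟩
    simp [hmulVec, hlt i]
  · rintro ⟨c, rfl⟩
    exact ⟨fun p => c (p.1 + 1), funext fun i => hmulVec _ i⟩

end SingleInput

section Levelwise

variable {ι κ : Type*} [Fintype ι] (ℓ : ι → κ) (w : ι → ℝ)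

theorem ncard_eq_sum_ncard_fiberwise {D : Finset κ} (hD : ∀ i, ℓ i ∈ D) (T : Set ι) :
    T.ncard = ∑ d ∈ D, {i | ℓ i = d ∧ i ∈ T}.ncard := by
  classical
  simp only [Set.ncard_eq_toFinset_card']
  rw [Finset.card_eq_sum_card_fiberwise fun i _ => hD i]
  refine Finset.sum_congr rfl fun d _ => congrArg _ ?_
  ext i
  simp [and_comm]

theorem ncard_level_pos_mul_le_max (d : κ) (s : ℝ) :
    {i | ℓ i = d ∧ 0 < w i * s}.ncard ≤
      max {i | ℓ i = d ∧ w i < 0}.ncard {i | ℓ i = d ∧ 0 < w i}.ncard := by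
  rcases lt_trichotomy s 0 with hs | rfl | hs
  · exact le_max_of_le_left <| Set.ncard_le_ncard fun i ⟨hi, hpos⟩ =>
      ⟨hi, neg_of_mul_pos_left hpos hs.le⟩
  · simp
  · exact le_max_of_le_right <| Set.ncard_le_ncard fun i ⟨hi, hpos⟩ =>
      ⟨hi, pos_of_mul_pos_left hpos hs.le⟩

theorem isGreatest_ncard_pos_levelwise {D : Finset κ} (hD : ∀ i, ℓ i ∈ D) :
    IsGreatest {c : ℕ | ∃ S : Set ι,
        (∃ v ∈ Set.range fun y : κ → ℝ => fun i => w i * y (ℓ i), ∀ i ∈ S, 0 < v i) ∧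
          S.ncard = c}
      (∑ d ∈ D, max {i | ℓ i = d ∧ w i < 0}.ncard {i | ℓ i = d ∧ 0 < w i}.ncard) := by
  have hcount (y : κ → ℝ) :
      {i | 0 < w i * y (ℓ i)}.ncard = ∑ d ∈ D, {i | ℓ i = d ∧ 0 < w i * y d}.ncard := by
    rw [ncard_eq_sum_ncard_fiberwise ℓ hD]
    exact Finset.sum_congr rfl fun d _ =>
      congrArg _ (Set.ext fun i => and_congr_right fun h => by simp [h])
  constructor
  · classical
    let y d : ℝ :=
      if {i | ℓ i = d ∧ w i < 0}.ncard ≤ {i | ℓ i = d ∧ 0 < w i}.ncard then 1 else -1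
    refine ⟨_, ⟨_, ⟨y, rfl⟩, fun i hi => hi⟩,
      (hcount y).trans (Finset.sum_congr rfl fun d _ => ?_)⟩
    by_cases h : {i | ℓ i = d ∧ w i < 0}.ncard ≤ {i | ℓ i = d ∧ 0 < w i}.ncard
    · simp [y, h]
    · simp [y, h, le_of_not_ge h]
  · rintro c ⟨S, ⟨_, ⟨y, rfl⟩, hS⟩, rfl⟩
    calc S.ncard ≤ {i | 0 < w i * y (ℓ i)}.ncard := Set.ncard_le_ncard hS
      _ = _ := hcount y
      _ ≤ _ := Finset.sum_le_sum fun d _ => ncard_level_pos_mul_le_max ℓ w d (y d)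

end Levelwise

/-- Single-input system whose graph is an input-rooted out-branching: every state is the
endpoint of exactly one walk from the input; `len i` is the length of this unique walk
and `dmax` its maximum over all states. Then the maximum cardinality of a herdable
subset of states (herdability of `S` meaning that some `k` in the range of the
controllability matrix satisfies `k i > 0` on `S`) equals
`∑_{d=1}^{dmax} max (|N_d|, |P_d|)`. -/
theorem max_card_herdable_outBranching {n : ℕ}
    (A : Matrix (Fin n) (Fin n) ℝ) (B : Matrix (Fin n) (Fin 1) ℝ)
    (hout : ∀ i : Fin n, ∃! w : (e : ℕ) × (Fin (e + 1) → Fin n), IsWalk A B 0 i w.2)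
    (len : Fin n → ℕ)
    (hlen : ∀ (i : Fin n) (e : ℕ) (k : Fin (e + 1) → Fin n), IsWalk A B 0 i k →
      len i = e + 1)
    (dmax : ℕ) (hdmax : dmax = Finset.univ.sup len) :
    IsGreatest
      {c : ℕ | ∃ S : Set (Fin n),
        (∃ k : Fin n → ℝ, (∃ y : Fin n × Fin 1 → ℝ, (ctrb A B).mulVec y = k) ∧
          ∀ i ∈ S, 0 < k i) ∧ S.ncard = c}
      (∑ d ∈ Finset.Icc 1 dmax, max (Nset A B 0 d).ncard (Pset A B 0 d).ncard) := by
  choose walk hwalk huniq using hout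
  have hlen_walk i : len i = (walk i).1 + 1 := hlen i _ _ (hwalk i)
  have hP d : Pset A B 0 d = {i | len i = d ∧ 0 < walkWeight A B 0 (walk i).2} := by
    ext i
    simp [mem_Pset_iff_of_unique (hwalk i) (huniq i), hlen_walk, eq_comm]
  have hN d : Nset A B 0 d = {i | len i = d ∧ walkWeight A B 0 (walk i).2 < 0} := by
    ext i
    simp [mem_Nset_iff_of_unique (hwalk i) (huniq i), hlen_walk, eq_comm]
  have hrange := range_ctrb_mulVec_of_unique walk hwalk huniq
  simp only [← hlen_walk] at hrange
  have hD i : len i ∈ Finset.Icc 1 dmax :=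
    Finset.mem_Icc.2 ⟨by rw [hlen_walk]; omega, hdmax ▸ Finset.le_sup (Finset.mem_univ i)⟩
  simp only [hP, hN]
  change IsGreatest {c | ∃ S : Set (Fin n),
    (∃ v ∈ Set.range (ctrb A B).mulVec, ∀ i ∈ S, 0 < v i) ∧ S.ncard = c} _
  rw [hrange]
  exact isGreatest_ncard_pos_levelwise len _ hD
end
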